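/- Let S : M(D,H₁) → H₂ be linear and weak-* to weak continuous, α ≥ 0, p_d ∈ H₂. The solution set U_{p_d,α} of the regularized problem (for α > 0) or the minimum-norm problem min ‖u‖ subject to S u = p_d (for α = 0, assuming feasibility) is nonempty, convex, and weak-* compact, and hence equals the weak-* closed convex hull of its extremal points. -/

import Mathlib

open NormedSpace

/-- Auxiliary: a lower semicontinuous real function attains its minimum on a
nonempty compact closed set. -/
theorem lsc_exists_min_aux {X : Type*} [TopologicalSpace X] {K : Set X}
    (hK : IsCompact K) (hKc : IsClosed K) (hne : K.Nonempty) {f : X → ℝ}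
    (hf : LowerSemicontinuous f) : ∃ u ∈ K, ∀ v ∈ K, f u ≤ f v := by
  haveI : Nonempty K := hne.to_subtype
  have h := IsCompact.nonempty_iInter_of_directed_nonempty_isCompact_isClosed
    (fun v : K => K ∩ f ⁻¹' Set.Iic (f (v : X)))
    (fun v w => by
      rcases le_total (f (v : X)) (f (w : X)) with h | h
      · exact ⟨v, Set.Subset.rfl, fun x hx => ⟨hx.1, le_trans hx.2 h⟩⟩
      · exact ⟨w, fun x hx => ⟨hx.1, le_trans hx.2 h⟩, Set.Subset.rfl⟩)
    (fun v => ⟨v, v.2, Set.mem_preimage.2 (Set.mem_Iic.2 (le_refl _))⟩)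
    (fun v => hK.inter_right (hf.isClosed_preimage _))
    (fun v => hKc.inter (hf.isClosed_preimage _))
  obtain ⟨u, hu⟩ := h
  simp only [Set.mem_iInter, Set.mem_inter_iff, Set.mem_preimage, Set.mem_Iic] at hu
  obtain ⟨v₀⟩ := (inferInstance : Nonempty K)
  exact ⟨u, (hu v₀).1, fun v hv => (hu ⟨v, hv⟩).2⟩

/-- Auxiliary: the dual norm is weak-* lower semicontinuous. -/
theorem weakdual_norm_lsc {E : Type*} [NormedAddCommGroup E] [NormedSpace ℝ E] :
    LowerSemicontinuous fun x : WeakDual ℝ E => ‖WeakDual.toStrongDual x‖ := by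
  rw [lowerSemicontinuous_iff_isClosed_preimage]
  intro c
  have h : (fun x : WeakDual ℝ E => ‖WeakDual.toStrongDual x‖) ⁻¹' Set.Iic c
      = WeakDual.toStrongDual ⁻¹' Metric.closedBall 0 c := by
    ext x; simp [Metric.mem_closedBall, dist_zero_right]
  rw [h]; exact WeakDual.isClosed_closedBall 0 c

/-- Auxiliary: the data-fit term is weak-* lower semicontinuous. -/
theorem weakdual_fit_lsc {E H₂ : Type*} [NormedAddCommGroup E] [NormedSpace ℝ E]
    [NormedAddCommGroup H₂] [InnerProductSpace ℝ H₂]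
    (S : StrongDual ℝ E →ₗ[ℝ] H₂)
    (hScont : ∀ y : H₂,
      Continuous fun u : WeakDual ℝ E => (inner ℝ (S (WeakDual.toStrongDual u)) y : ℝ))
    (p_d : H₂) :
    LowerSemicontinuous fun x : WeakDual ℝ E => ‖S (WeakDual.toStrongDual x) - p_d‖ := by
  rw [lowerSemicontinuous_iff_isClosed_preimage]
  intro c
  have hset : (fun x : WeakDual ℝ E => ‖S (WeakDual.toStrongDual x) - p_d‖) ⁻¹' Set.Iic c
      = ⋂ (y : H₂) (_ : ‖y‖ ≤ 1),
          {x : WeakDual ℝ E | (inner ℝ (S (WeakDual.toStrongDual x) - p_d) y : ℝ) ≤ c} := by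
    ext x
    simp only [Set.mem_preimage, Set.mem_Iic, Set.mem_iInter, Set.mem_setOf_eq]
    constructor
    · intro h y hy
      calc (inner ℝ (S (WeakDual.toStrongDual x) - p_d) y : ℝ)
          ≤ ‖S (WeakDual.toStrongDual x) - p_d‖ * ‖y‖ := real_inner_le_norm _ _
        _ ≤ c := by nlinarith [norm_nonneg (S (WeakDual.toStrongDual x) - p_d)]
    · intro h
      by_cases hz : S (WeakDual.toStrongDual x) - p_d = 0
      · rw [hz, norm_zero]
        simpa using h 0 (by simp)
      · have hzn : ‖S (WeakDual.toStrongDual x) - p_d‖ ≠ 0 := norm_ne_zero_iff.2 hz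
        have h1 := h (‖S (WeakDual.toStrongDual x) - p_d‖⁻¹ • (S (WeakDual.toStrongDual x) - p_d))
          (by rw [norm_smul, norm_inv, norm_norm, inv_mul_cancel₀ hzn])
        rw [real_inner_smul_right, real_inner_self_eq_norm_mul_norm,
          inv_mul_cancel_left₀ hzn] at h1
        exact h1
  rw [hset]
  refine isClosed_iInter fun y => isClosed_iInter fun _ => ?_
  have hc : Continuous fun x : WeakDual ℝ E =>
      (inner ℝ (S (WeakDual.toStrongDual x) - p_d) y : ℝ) := by
    simp only [inner_sub_left]
    exact (hScont y).sub continuous_const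
  exact isClosed_le hc continuous_const

/-- Auxiliary: the feasible set is weak-* closed. -/
theorem weakdual_feasible_closed {E H₂ : Type*} [NormedAddCommGroup E] [NormedSpace ℝ E]
    [NormedAddCommGroup H₂] [InnerProductSpace ℝ H₂]
    (S : StrongDual ℝ E →ₗ[ℝ] H₂)
    (hScont : ∀ y : H₂,
      Continuous fun u : WeakDual ℝ E => (inner ℝ (S (WeakDual.toStrongDual u)) y : ℝ))
    (p_d : H₂) :
    IsClosed {x : WeakDual ℝ E | S (WeakDual.toStrongDual x) = p_d} := by
  have h : {x : WeakDual ℝ E | S (WeakDual.toStrongDual x) = p_d}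
      = ⋂ y : H₂, {x : WeakDual ℝ E |
          (inner ℝ (S (WeakDual.toStrongDual x)) y : ℝ) = inner ℝ p_d y} := by
    ext x
    simp only [Set.mem_setOf_eq, Set.mem_iInter]
    exact ⟨fun h y => by rw [h], fun h => ext_inner_right ℝ h⟩
  rw [h]
  exact isClosed_iInter fun y => isClosed_eq (hScont y) continuous_const

/-- Auxiliary: the Tikhonov objective is convex. -/
theorem objective_convexOn {E H₂ : Type*} [NormedAddCommGroup E] [NormedSpace ℝ E]
    [NormedAddCommGroup H₂] [InnerProductSpace ℝ H₂]
    (S : StrongDual ℝ E →ₗ[ℝ] H₂) (p_d : H₂) (a : ℝ) (ha : 0 ≤ a) :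
    ConvexOn ℝ Set.univ (fun u : StrongDual ℝ E => a * ‖S u - p_d‖ ^ 2 + ‖u‖) := by
  have h1 : ConvexOn ℝ Set.univ (fun u : StrongDual ℝ E => ‖S u - p_d‖) := by
    refine ⟨convex_univ, fun u _ v _ b c hb hc hbc => ?_⟩
    simp only [smul_eq_mul]
    have hkey : S (b • u + c • v) - p_d = b • (S u - p_d) + c • (S v - p_d) := by
      have hp : b • (S u - p_d) + c • (S v - p_d) = b • S u + c • S v - (b + c) • p_d := by
        rw [add_smul, smul_sub, smul_sub]; abel
      rw [map_add, map_smul, map_smul, hp, hbc, one_smul]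
    rw [hkey]
    calc ‖b • (S u - p_d) + c • (S v - p_d)‖
        ≤ ‖b • (S u - p_d)‖ + ‖c • (S v - p_d)‖ := norm_add_le _ _
      _ = b * ‖S u - p_d‖ + c * ‖S v - p_d‖ := by
          rw [norm_smul, norm_smul, Real.norm_of_nonneg hb, Real.norm_of_nonneg hc]
  have h2 : ConvexOn ℝ Set.univ (fun u : StrongDual ℝ E => a * ‖S u - p_d‖ ^ 2) := by
    refine ⟨convex_univ, fun u hu v hv b c hb hc hbc => ?_⟩
    have hg := h1.2 hu hv hb hc hbc
    simp only [smul_eq_mul] at hg ⊢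
    have hs : (0:ℝ) ≤ ‖S u - p_d‖ := norm_nonneg _
    have ht : (0:ℝ) ≤ ‖S v - p_d‖ := norm_nonneg _
    have hg0 : (0:ℝ) ≤ ‖S (b • u + c • v) - p_d‖ := norm_nonneg _
    have key : ‖S (b • u + c • v) - p_d‖ ^ 2
        ≤ b * ‖S u - p_d‖ ^ 2 + c * ‖S v - p_d‖ ^ 2 := by
      nlinarith [mul_nonneg (mul_nonneg hb hc) (sq_nonneg (‖S u - p_d‖ - ‖S v - p_d‖))]
    nlinarith [mul_le_mul_of_nonneg_left key ha]
  exact h2.add (convexOn_univ_norm (E := StrongDual ℝ E))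

set_option maxHeartbeats 1000000 in
/-- Let `S : M(D,H₁) → H₂` be linear and weak-* to weak continuous,
`α ≥ 0`, `p_d ∈ H₂`.  The solution set `U` of the regularized problem
`min (1/(2α))‖S u − p_d‖² + ‖u‖` (for `α > 0`), resp. of the minimum-norm problem
`min ‖u‖ s.t. S u = p_d` (for `α = 0`, assuming feasibility), is nonempty, convex, and
weak-* compact, and hence (Krein–Milman) equals the weak-* closed convex hull of its
extremal points. -/
theorem solution_set_krein_milman
    (D H₁ H₂ : Type*) [MetricSpace D] [CompactSpace D]
    [NormedAddCommGroup H₁] [InnerProductSpace ℝ H₁] [CompleteSpace H₁]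
    [TopologicalSpace.SeparableSpace H₁]
    [NormedAddCommGroup H₂] [InnerProductSpace ℝ H₂] [CompleteSpace H₂]
    [TopologicalSpace.SeparableSpace H₂]
    (S : StrongDual ℝ C(D, H₁) →ₗ[ℝ] H₂)
    (hScont : ∀ y : H₂,
      Continuous fun u : WeakDual ℝ C(D, H₁) => (inner ℝ (S (WeakDual.toStrongDual u)) y : ℝ))
    (p_d : H₂) (α : ℝ) (hα : 0 ≤ α)
    (U : Set (StrongDual ℝ C(D, H₁)))
    (hU : (0 < α ∧
            U = {u | ∀ v, (1 / (2 * α)) * ‖S u - p_d‖ ^ 2 + ‖u‖ ≤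
                          (1 / (2 * α)) * ‖S v - p_d‖ ^ 2 + ‖v‖}) ∨
          (α = 0 ∧ (∃ w, S w = p_d) ∧
            U = {u | S u = p_d ∧ ∀ v, S v = p_d → ‖u‖ ≤ ‖v‖})) :
    U.Nonempty ∧ Convex ℝ U ∧
      IsCompact (StrongDual.toWeakDual '' U : Set (WeakDual ℝ C(D, H₁))) ∧
      closure (convexHull ℝ
          (Set.extremePoints ℝ (StrongDual.toWeakDual '' U : Set (WeakDual ℝ C(D, H₁)))))
        = StrongDual.toWeakDual '' U := by
  have hVmem : ∀ (x : WeakDual ℝ C(D, H₁)),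
      x ∈ (StrongDual.toWeakDual '' U : Set (WeakDual ℝ C(D, H₁)))
        ↔ WeakDual.toStrongDual x ∈ U := by
    intro x
    constructor
    · rintro ⟨u, hu, rfl⟩; exact hu
    · intro h; exact ⟨WeakDual.toStrongDual x, h, rfl⟩
  -- reduce Krein–Milman to the first three claims
  suffices h : U.Nonempty ∧ Convex ℝ U ∧
      IsCompact (StrongDual.toWeakDual '' U : Set (WeakDual ℝ C(D, H₁))) by
    obtain ⟨h1, h2, h3⟩ := h
    have hVconv : Convex ℝ (StrongDual.toWeakDual '' U : Set (WeakDual ℝ C(D, H₁))) := by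
      intro x hx y hy b c hb hc hbc
      rw [hVmem] at hx hy ⊢
      exact h2 hx hy hb hc hbc
    haveI : LocallyConvexSpace ℝ (WeakDual ℝ C(D, H₁)) :=
      WeakBilin.locallyConvexSpace (B := topDualPairing ℝ C(D, H₁))
    exact ⟨h1, h2, h3, closure_convexHull_extremePoints h3 hVconv⟩
  rcases hU with ⟨hα0, hUeq⟩ | ⟨hα0, ⟨w, hw⟩, hUeq⟩
  · -- regularized problem, α > 0
    set a : ℝ := 1 / (2 * α) with ha_def
    have ha : 0 < a := by positivity
    -- lower semicontinuity of the objective on the weak-* dual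
    have hlsc : LowerSemicontinuous (fun x : WeakDual ℝ C(D, H₁) =>
        a * ‖S (WeakDual.toStrongDual x) - p_d‖ ^ 2 + ‖WeakDual.toStrongDual x‖) := by
      have hmax : Monotone (fun t : ℝ => a * max t 0 ^ 2) := by
        intro s t hst
        have h0 : (0:ℝ) ≤ max s 0 := le_max_right _ _
        have h1 : max s 0 ≤ max t 0 := max_le_max hst le_rfl
        have h2 := pow_le_pow_left₀ h0 h1 2
        exact mul_le_mul_of_nonneg_left h2 ha.le
      have hcont : Continuous (fun t : ℝ => a * max t 0 ^ 2) :=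
        continuous_const.mul ((continuous_id.max continuous_const).pow 2)
      have hcomp := hcont.comp_lowerSemicontinuous (weakdual_fit_lsc S hScont p_d) hmax
      have heq : (fun x : WeakDual ℝ C(D, H₁) =>
            a * max ‖S (WeakDual.toStrongDual x) - p_d‖ 0 ^ 2)
          = fun x : WeakDual ℝ C(D, H₁) => a * ‖S (WeakDual.toStrongDual x) - p_d‖ ^ 2 := by
        funext x; rw [max_eq_left (norm_nonneg _)]
      have hcomp' : LowerSemicontinuous (fun x : WeakDual ℝ C(D, H₁) =>
          a * ‖S (WeakDual.toStrongDual x) - p_d‖ ^ 2) := by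
        rw [← heq]; exact hcomp
      exact hcomp'.add weakdual_norm_lsc
    -- minimize over a compact ball
    have hf0 : a * ‖S (0 : StrongDual ℝ C(D, H₁)) - p_d‖ ^ 2 + ‖(0 : StrongDual ℝ C(D, H₁))‖
        = a * ‖p_d‖ ^ 2 := by
      rw [map_zero, zero_sub, norm_neg, norm_zero (E := StrongDual ℝ C(D, H₁)), add_zero]
    have hR : (0:ℝ) ≤ a * ‖p_d‖ ^ 2 := by positivity
    have h0K : (0 : WeakDual ℝ C(D, H₁)) ∈
        WeakDual.toStrongDual ⁻¹' Metric.closedBall 0 (a * ‖p_d‖ ^ 2) := by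
      simp [Metric.mem_closedBall, hR]
    obtain ⟨u₀, hu₀K, hu₀min⟩ := lsc_exists_min_aux
      (WeakDual.isCompact_closedBall (𝕜 := ℝ) (E := C(D, H₁)) 0 (a * ‖p_d‖ ^ 2))
      (WeakDual.isClosed_closedBall (𝕜 := ℝ) (E := C(D, H₁)) 0 (a * ‖p_d‖ ^ 2)) ⟨0, h0K⟩ hlsc
    set u₁ : StrongDual ℝ C(D, H₁) := WeakDual.toStrongDual u₀ with hu₁
    have hglobal : ∀ v : StrongDual ℝ C(D, H₁),
        a * ‖S u₁ - p_d‖ ^ 2 + ‖u₁‖ ≤ a * ‖S v - p_d‖ ^ 2 + ‖v‖ := by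
      intro v
      by_cases hv : ‖v‖ ≤ a * ‖p_d‖ ^ 2
      · exact hu₀min (StrongDual.toWeakDual v)
          (by simpa [Metric.mem_closedBall, dist_zero_right] using hv)
      · push_neg at hv
        have h0 := hu₀min 0 h0K
        rw [show WeakDual.toStrongDual (0 : WeakDual ℝ C(D, H₁)) = (0 : StrongDual ℝ C(D, H₁))
          from rfl, hf0] at h0
        have hnn : (0:ℝ) ≤ a * ‖S v - p_d‖ ^ 2 := by positivity
        calc a * ‖S u₁ - p_d‖ ^ 2 + ‖u₁‖ ≤ a * ‖p_d‖ ^ 2 := h0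
          _ ≤ ‖v‖ := hv.le
          _ ≤ a * ‖S v - p_d‖ ^ 2 + ‖v‖ := by linarith
    have hUchar : U = {u : StrongDual ℝ C(D, H₁) |
        a * ‖S u - p_d‖ ^ 2 + ‖u‖ ≤ a * ‖S u₁ - p_d‖ ^ 2 + ‖u₁‖} := by
      rw [hUeq]
      ext u
      simp only [Set.mem_setOf_eq]
      exact ⟨fun h => h u₁, fun h v => le_trans h (hglobal v)⟩
    refine ⟨⟨u₁, by rw [hUchar, Set.mem_setOf_eq]⟩, ?_, ?_⟩
    · -- convexity
      rw [hUchar]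
      have hcvx := (objective_convexOn S p_d a ha.le).convex_le
        (a * ‖S u₁ - p_d‖ ^ 2 + ‖u₁‖)
      simpa using hcvx
    · -- compactness
      set m : ℝ := a * ‖S u₁ - p_d‖ ^ 2 + ‖u₁‖ with hm
      have hVeq : (StrongDual.toWeakDual '' U : Set (WeakDual ℝ C(D, H₁)))
          = (fun x : WeakDual ℝ C(D, H₁) =>
              a * ‖S (WeakDual.toStrongDual x) - p_d‖ ^ 2 + ‖WeakDual.toStrongDual x‖)
            ⁻¹' Set.Iic m := by
        ext x
        rw [hVmem, hUchar]
        simp only [Set.mem_setOf_eq, Set.mem_preimage, Set.mem_Iic]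
      have hVclosed : IsClosed (StrongDual.toWeakDual '' U : Set (WeakDual ℝ C(D, H₁))) := by
        rw [hVeq]; exact hlsc.isClosed_preimage m
      have hVsub : (StrongDual.toWeakDual '' U : Set (WeakDual ℝ C(D, H₁)))
          ⊆ WeakDual.toStrongDual ⁻¹' Metric.closedBall 0 m := by
        intro x hx
        rw [hVeq] at hx
        simp only [Set.mem_preimage, Set.mem_Iic] at hx
        have hnn : (0:ℝ) ≤ a * ‖S (WeakDual.toStrongDual x) - p_d‖ ^ 2 := by positivity
        simp only [Set.mem_preimage, Metric.mem_closedBall, dist_zero_right]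
        have hd : dist (WeakDual.toStrongDual x) 0 = ‖WeakDual.toStrongDual x‖ :=
          dist_zero_right (WeakDual.toStrongDual x)
        linarith
      exact (WeakDual.isCompact_closedBall (𝕜 := ℝ) (E := C(D, H₁)) 0 m).of_isClosed_subset hVclosed hVsub
  · -- minimum-norm problem, α = 0
    have hFcl := weakdual_feasible_closed S hScont p_d
    have hwK : StrongDual.toWeakDual w ∈
        {x : WeakDual ℝ C(D, H₁) | S (WeakDual.toStrongDual x) = p_d}
          ∩ WeakDual.toStrongDual ⁻¹' Metric.closedBall 0 ‖w‖ := by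
      refine ⟨hw, ?_⟩
      simp [Metric.mem_closedBall, dist_zero_right]
      exact (dist_zero_right w).le
    obtain ⟨u₀, hu₀K, hu₀min⟩ := lsc_exists_min_aux
      ((WeakDual.isCompact_closedBall (𝕜 := ℝ) (E := C(D, H₁)) 0 ‖w‖).inter_left hFcl)
      (hFcl.inter (WeakDual.isClosed_closedBall (𝕜 := ℝ) (E := C(D, H₁)) 0 ‖w‖))
      ⟨StrongDual.toWeakDual w, hwK⟩ weakdual_norm_lsc
    set u₁ : StrongDual ℝ C(D, H₁) := WeakDual.toStrongDual u₀ with hu₁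
    have hu₁feas : S u₁ = p_d := hu₀K.1
    have hu₁w : ‖u₁‖ ≤ ‖w‖ := by
      have := hu₀K.2
      simpa [Metric.mem_closedBall, dist_zero_right] using this
    have hglobal : ∀ v : StrongDual ℝ C(D, H₁), S v = p_d → ‖u₁‖ ≤ ‖v‖ := by
      intro v hv
      by_cases hvw : ‖v‖ ≤ ‖w‖
      · exact hu₀min (StrongDual.toWeakDual v)
          ⟨hv, by simpa [Metric.mem_closedBall, dist_zero_right] using hvw⟩
      · push_neg at hvw
        exact le_trans hu₁w hvw.le
    have hUchar : U = {u : StrongDual ℝ C(D, H₁) | S u = p_d ∧ ‖u‖ ≤ ‖u₁‖} := by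
      rw [hUeq]
      ext u
      simp only [Set.mem_setOf_eq]
      exact ⟨fun h => ⟨h.1, h.2 u₁ hu₁feas⟩,
        fun h => ⟨h.1, fun v hv => le_trans h.2 (hglobal v hv)⟩⟩
    refine ⟨⟨u₁, by rw [hUchar, Set.mem_setOf_eq]; exact ⟨hu₁feas, le_refl _⟩⟩, ?_, ?_⟩
    · rw [hUchar]
      have hc1 : Convex ℝ {u : StrongDual ℝ C(D, H₁) | S u = p_d} := by
        intro u hu v hv b c hb hc hbc
        simp only [Set.mem_setOf_eq] at hu hv ⊢
        rw [map_add, map_smul, map_smul, hu, hv, ← add_smul, hbc, one_smul]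
      have hc2 : Convex ℝ {u : StrongDual ℝ C(D, H₁) | ‖u‖ ≤ ‖u₁‖} := by
        have := convex_closedBall (0 : StrongDual ℝ C(D, H₁)) ‖u₁‖
        have hset : {u : StrongDual ℝ C(D, H₁) | ‖u‖ ≤ ‖u₁‖} = Metric.closedBall 0 ‖u₁‖ := by
          ext u
          exact Iff.of_eq (congrArg (· ≤ ‖u₁‖) (dist_zero_right u).symm)
        rw [hset]; exact this
      exact hc1.inter hc2
    · have hVeq : (StrongDual.toWeakDual '' U : Set (WeakDual ℝ C(D, H₁)))
          = {x : WeakDual ℝ C(D, H₁) | S (WeakDual.toStrongDual x) = p_d}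
            ∩ WeakDual.toStrongDual ⁻¹' Metric.closedBall 0 ‖u₁‖ := by
        ext x
        rw [hVmem, hUchar]
        simp [Metric.mem_closedBall, dist_zero_right]
        exact fun _ => Iff.of_eq (congrArg (· ≤ ‖u₁‖) (dist_zero_right (WeakDual.toStrongDual x)).symm)
      rw [hVeq]
      exact (WeakDual.isCompact_closedBall (𝕜 := ℝ) (E := C(D, H₁)) 0 ‖u₁‖).inter_left hFcl
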